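/- Let a₁, b₁, a₂, b₂ : ℝ → ℂ be continuous on [0,1]. For i = 1,2 define hᵢ : ℝ → ℂ on [0,4] by hᵢ(t) = aᵢ(t) for t ∈ [0,1], hᵢ(t) = bᵢ(t−1) for t ∈ (1,2], hᵢ(t) = −aᵢ(3−t) for t ∈ (2,3], hᵢ(t) = −bᵢ(4−t) for t ∈ (3,4]. Then (a) ∫_{0 ≤ s ≤ t ≤ 4} h₂(s)h₁(t) ds dt = − ∫_{0 ≤ s ≤ t ≤ 4} h₁(s)h₂(t) ds dt; and (b) ∫_{0 ≤ s ≤ t ≤ 4} h₁(s)h₁(t) ds dt = 0. -/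

import Mathlib

/-!
Write `Hᵢ(t) = ∫₀ᵗ hᵢ`. The product rule for `H₁H₂` and the fundamental theorem of calculus give
the shuffle relation `∫ ω₁∘ω₂ + ∫ ω₂∘ω₁ = ∫ ω₁ · ∫ ω₂`; the `hᵢ` are only piecewise continuous,
but the breakpoints form a countable set, which the fundamental theorem tolerates. Over a
commutator loop the contributions of `μ` and `τ` cancel against those of `μ⁻¹` and `τ⁻¹`, so
`∫ ωᵢ = 0`. Hence `∫ ω₂∘ω₁ = -∫ ω₁∘ω₂`, and for `ω₁ = ω₂` this forces `∫ ω₁∘ω₁ = 0`.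
-/

open MeasureTheory intervalIntegral Set

section Piecewise

variable {E : Type*} [NormedAddCommGroup E] {f c : ℝ → E} {p q : ℝ}

theorem ContinuousOn.intervalIntegrable_of_eqOn_Ioc (hc : ContinuousOn c (Icc p q))
    (hpq : p ≤ q) (hfc : EqOn f c (Ioc p q)) : IntervalIntegrable f volume p q :=
  (hc.intervalIntegrable_of_Icc hpq).congr_uIoo
    (by rw [uIoo_of_le hpq]; exact (hfc.mono Ioo_subset_Ioc_self).symm)

theorem ContinuousOn.continuousAt_of_eqOn_Ioc (hc : ContinuousOn c (Icc p q))
    (hfc : EqOn f c (Ioc p q)) {x : ℝ} (hx : x ∈ Ioo p q) : ContinuousAt f x :=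
  (hc.continuousAt (Icc_mem_nhds hx.1 hx.2)).congr <|
    Filter.eventuallyEq_of_mem (Ioo_mem_nhds hx.1 hx.2) fun _ hy =>
      (hfc (Ioo_subset_Ioc_self hy)).symm

def PiecewiseContinuousOnUnitIntervals (f : ℝ → E) (n : ℕ) : Prop :=
  ∀ k < n, ∃ c : ℝ → E, ContinuousOn c (Icc k (k + 1)) ∧ EqOn f c (Ioc k (k + 1))

namespace PiecewiseContinuousOnUnitIntervals

variable {n : ℕ}

theorem intervalIntegrable_piece (hf : PiecewiseContinuousOnUnitIntervals f n) {k : ℕ}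
    (hk : k < n) : IntervalIntegrable f volume k (k + 1) := by
  obtain ⟨c, hc, hfc⟩ := hf k hk
  exact hc.intervalIntegrable_of_eqOn_Ioc (by linarith) hfc

theorem intervalIntegrable (hf : PiecewiseContinuousOnUnitIntervals f n) :
    IntervalIntegrable f volume 0 n := by
  simpa using IntervalIntegrable.trans_iterate (a := Nat.cast) fun k hk => by
    exact_mod_cast hf.intervalIntegrable_piece hk

theorem sum_integral_pieces [NormedSpace ℝ E] (hf : PiecewiseContinuousOnUnitIntervals f n) :
    ∑ k ∈ Finset.range n, ∫ t in (k : ℝ)..k + 1, f t = ∫ t in (0 : ℝ)..n, f t := by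
  simpa using sum_integral_adjacent_intervals (a := Nat.cast) fun k hk => by
    exact_mod_cast hf.intervalIntegrable_piece hk

theorem continuousAt (hf : PiecewiseContinuousOnUnitIntervals f n) {x : ℝ}
    (hx : x ∈ Ioo 0 (n : ℝ) \ range ((↑) : ℕ → ℝ)) : ContinuousAt f x := by
  obtain ⟨⟨hx0, hxn⟩, hxℕ⟩ := hx
  have hfloor : (⌊x⌋₊ : ℝ) < x := (Nat.floor_le hx0.le).lt_of_ne fun h => hxℕ ⟨_, h⟩
  obtain ⟨c, hc, hfc⟩ := hf ⌊x⌋₊ ((Nat.floor_lt hx0.le).2 hxn)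
  exact hc.continuousAt_of_eqOn_Ioc hfc ⟨hfloor, Nat.lt_floor_add_one x⟩

end PiecewiseContinuousOnUnitIntervals

end Piecewise

theorem IntervalIntegrable.hasDerivAt_primitive {E : Type*} [NormedAddCommGroup E]
    [NormedSpace ℝ E] [CompleteSpace E] {f : ℝ → E} {a b x : ℝ} (hab : a ≤ b)
    (hf : IntervalIntegrable f volume a b) (hx : x ∈ Ioo a b) (hfx : ContinuousAt f x) :
    HasDerivAt (fun t => ∫ s in a..t, f s) (f x) x := by
  have hmeas : StronglyMeasurableAtFilter f (nhds x) :=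
    ⟨Ioo a b, Ioo_mem_nhds hx.1 hx.2, (hf.def'.mono_set <|
      Ioo_subset_Ioc_self.trans (uIoc_of_le hab).symm.subset).aestronglyMeasurable⟩
  refine integral_hasDerivAt_right (hf.mono_set <| uIcc_subset_uIcc_left ?_) hmeas hfx
  rw [uIcc_of_le hab]
  exact Ioo_subset_Icc_self hx

section IteratedIntegral

variable {𝕜 : Type*} [RCLike 𝕜]

/-- `∫_{a ≤ s ≤ t ≤ b} f(s) g(t)`: the paper's `∫ ω₁∘ω₂` when `f`, `g` are the pullbacks of
`ω₁`, `ω₂`. -/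
noncomputable def iteratedIntegral (f g : ℝ → 𝕜) (a b : ℝ) : 𝕜 :=
  ∫ t in a..b, ∫ s in a..t, f s * g t

theorem iteratedIntegral_eq_integral_primitive_mul (f g : ℝ → 𝕜) (a b : ℝ) :
    iteratedIntegral f g a b = ∫ t in a..b, (∫ s in a..t, f s) * g t := by
  simp only [iteratedIntegral, intervalIntegral.integral_mul_const]

theorem iteratedIntegral_add_iteratedIntegral_swap {f g : ℝ → 𝕜} {a b : ℝ} (hab : a ≤ b)
    {s : Set ℝ} (hs : s.Countable)
    (hf : IntervalIntegrable f volume a b) (hg : IntervalIntegrable g volume a b)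
    (hfc : ∀ x ∈ Ioo a b \ s, ContinuousAt f x) (hgc : ∀ x ∈ Ioo a b \ s, ContinuousAt g x) :
    iteratedIntegral f g a b + iteratedIntegral g f a b =
      (∫ t in a..b, f t) * ∫ t in a..b, g t := by
  set F : ℝ → 𝕜 := fun t => ∫ s in a..t, f s
  set G : ℝ → 𝕜 := fun t => ∫ s in a..t, g s
  have hF : ContinuousOn F (uIcc a b) :=
    continuousOn_primitive_interval <| (intervalIntegrable_iff' ..).1 hf
  have hG : ContinuousOn G (uIcc a b) :=
    continuousOn_primitive_interval <| (intervalIntegrable_iff' ..).1 hg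
  have hFG : ContinuousOn (F * G) (Icc a b) := by
    rw [← uIcc_of_le hab]
    exact hF.mul hG
  have hderiv : ∀ x ∈ Ioo a b \ s, HasDerivAt (F * G) (F x * g x + G x * f x) x := by
    intro x hx
    convert (hf.hasDerivAt_primitive hab hx.1 (hfc x hx)).mul
      (hg.hasDerivAt_primitive hab hx.1 (hgc x hx)) using 1
    ring
  rw [iteratedIntegral_eq_integral_primitive_mul, iteratedIntegral_eq_integral_primitive_mul,
    ← integral_add (hg.continuousOn_mul hF) (hf.continuousOn_mul hG),
    integral_eq_of_hasDerivAt_off_countable_of_le _ _ hab hs hFG hderiv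
      ((hg.continuousOn_mul hF).add (hf.continuousOn_mul hG))]
  simp [F, G]

end IteratedIntegral

/-- `h` is the pullback along `μτμ⁻¹τ⁻¹`, reparametrized by `[0, 4]`, of a form whose pullbacks
along `μ` and `τ` are `a` and `b`. -/
structure IsCommutatorPullback {E : Type*} [NormedAddCommGroup E] (a b h : ℝ → E) : Prop where
  continuousOn_a : ContinuousOn a (Icc 0 1)
  continuousOn_b : ContinuousOn b (Icc 0 1)
  eqOn_a : EqOn h a (Icc 0 1)
  eqOn_b : EqOn h (fun t => b (t - 1)) (Ioc 1 2)
  eqOn_a_inv : EqOn h (fun t => -a (3 - t)) (Ioc 2 3)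
  eqOn_b_inv : EqOn h (fun t => -b (4 - t)) (Ioc 3 4)

namespace IsCommutatorPullback

variable {E : Type*} [NormedAddCommGroup E] {a b h : ℝ → E}

theorem piecewiseContinuousOnUnitIntervals (H : IsCommutatorPullback a b h) :
    PiecewiseContinuousOnUnitIntervals h 4 := by
  intro k hk
  interval_cases k <;> norm_num
  · exact ⟨a, H.continuousOn_a, H.eqOn_a.mono Ioc_subset_Icc_self⟩
  · refine ⟨fun t => b (t - 1), H.continuousOn_b.comp (by fun_prop) fun t ht => ?_, H.eqOn_b⟩
    exact ⟨by linarith [ht.1], by linarith [ht.2]⟩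
  · refine ⟨fun t => -a (3 - t),
      (H.continuousOn_a.comp (by fun_prop) fun t ht => ?_).neg, H.eqOn_a_inv⟩
    exact ⟨by linarith [ht.2], by linarith [ht.1]⟩
  · refine ⟨fun t => -b (4 - t),
      (H.continuousOn_b.comp (by fun_prop) fun t ht => ?_).neg, H.eqOn_b_inv⟩
    exact ⟨by linarith [ht.2], by linarith [ht.1]⟩

theorem integral_eq_zero [NormedSpace ℝ E] (H : IsCommutatorPullback a b h) :
    ∫ t in (0 : ℝ)..4, h t = 0 := by
  have e₁ : ∫ t in (0 : ℝ)..1, h t = ∫ t in (0 : ℝ)..1, a t :=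
    integral_congr_Ioo_of_le zero_le_one (H.eqOn_a.mono Ioo_subset_Icc_self)
  have e₂ : ∫ t in (1 : ℝ)..2, h t = ∫ t in (0 : ℝ)..1, b t := by
    rw [integral_congr_Ioo_of_le one_le_two (H.eqOn_b.mono Ioo_subset_Ioc_self),
      integral_comp_sub_right]
    norm_num
  have e₃ : ∫ t in (2 : ℝ)..3, h t = -∫ t in (0 : ℝ)..1, a t := by
    rw [integral_congr_Ioo_of_le (by norm_num) (H.eqOn_a_inv.mono Ioo_subset_Ioc_self),
      intervalIntegral.integral_neg, integral_comp_sub_left]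
    norm_num
  have e₄ : ∫ t in (3 : ℝ)..4, h t = -∫ t in (0 : ℝ)..1, b t := by
    rw [integral_congr_Ioo_of_le (by norm_num) (H.eqOn_b_inv.mono Ioo_subset_Ioc_self),
      intervalIntegral.integral_neg, integral_comp_sub_left]
    norm_num
  have hsplit := H.piecewiseContinuousOnUnitIntervals.sum_integral_pieces
  norm_num [Finset.sum_range_succ] at hsplit
  rw [← hsplit, e₁, e₂, e₃, e₄]
  abel

theorem iteratedIntegral_add_iteratedIntegral_swap_eq_zero {𝕜 : Type*} [RCLike 𝕜]
    {a₁ b₁ a₂ b₂ h₁ h₂ : ℝ → 𝕜} (H₁ : IsCommutatorPullback a₁ b₁ h₁)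
    (H₂ : IsCommutatorPullback a₂ b₂ h₂) :
    iteratedIntegral h₁ h₂ 0 4 + iteratedIntegral h₂ h₁ 0 4 = 0 := by
  have hP₁ := H₁.piecewiseContinuousOnUnitIntervals
  have hP₂ := H₂.piecewiseContinuousOnUnitIntervals
  rw [iteratedIntegral_add_iteratedIntegral_swap zero_le_four (countable_range _)
    (by exact_mod_cast hP₁.intervalIntegrable) (by exact_mod_cast hP₂.intervalIntegrable)
    (fun x hx => hP₁.continuousAt (by exact_mod_cast hx))
    (fun x hx => hP₂.continuousAt (by exact_mod_cast hx)),
    H₁.integral_eq_zero, zero_mul]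

end IsCommutatorPullback

/-- Lemma 4.9: (a) the double iterated integral over a commutator loop
`[μ,τ] = μτμ⁻¹τ⁻¹` is antisymmetric in the two 1-forms; (b) the double
iterated integral of a 1-form with itself over a commutator loop vanishes.
Here `aᵢ`, `bᵢ` are the pullbacks of `ωᵢ` along `μ`, `τ`, and `hᵢ` is the
pullback along `[μ,τ]`, given piecewise on `[0,4]`. -/
theorem double_iterated_integral_commutator_antisymm
    (a₁ b₁ a₂ b₂ h₁ h₂ : ℝ → ℂ)
    (ha₁ : ContinuousOn a₁ (Set.Icc 0 1)) (hb₁ : ContinuousOn b₁ (Set.Icc 0 1))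
    (ha₂ : ContinuousOn a₂ (Set.Icc 0 1)) (hb₂ : ContinuousOn b₂ (Set.Icc 0 1))
    (h1a : ∀ t ∈ Set.Icc (0:ℝ) 1, h₁ t = a₁ t)
    (h1b : ∀ t ∈ Set.Ioc (1:ℝ) 2, h₁ t = b₁ (t - 1))
    (h1c : ∀ t ∈ Set.Ioc (2:ℝ) 3, h₁ t = -a₁ (3 - t))
    (h1d : ∀ t ∈ Set.Ioc (3:ℝ) 4, h₁ t = -b₁ (4 - t))
    (h2a : ∀ t ∈ Set.Icc (0:ℝ) 1, h₂ t = a₂ t)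
    (h2b : ∀ t ∈ Set.Ioc (1:ℝ) 2, h₂ t = b₂ (t - 1))
    (h2c : ∀ t ∈ Set.Ioc (2:ℝ) 3, h₂ t = -a₂ (3 - t))
    (h2d : ∀ t ∈ Set.Ioc (3:ℝ) 4, h₂ t = -b₂ (4 - t)) :
    ((∫ t in (0:ℝ)..4, ∫ s in (0:ℝ)..t, h₂ s * h₁ t)
        = -∫ t in (0:ℝ)..4, ∫ s in (0:ℝ)..t, h₁ s * h₂ t)
    ∧ (∫ t in (0:ℝ)..4, ∫ s in (0:ℝ)..t, h₁ s * h₁ t) = 0 := by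
  have H₁ : IsCommutatorPullback a₁ b₁ h₁ := ⟨ha₁, hb₁, h1a, h1b, h1c, h1d⟩
  have H₂ : IsCommutatorPullback a₂ b₂ h₂ := ⟨ha₂, hb₂, h2a, h2b, h2c, h2d⟩
  exact ⟨eq_neg_of_add_eq_zero_left (H₂.iteratedIntegral_add_iteratedIntegral_swap_eq_zero H₁),
    add_self_eq_zero.1 (H₁.iteratedIntegral_add_iteratedIntegral_swap_eq_zero H₁)⟩
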